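/- arXiv:1502.00764 — 2 statements merged into one kernel-verified Lean document; each statement's English description precedes it below -/
import Mathlib

section
/- Let R = F[y_1,...,y_m] be the polynomial ring graded by ℤ^p via deg(y_i) = a_i, where the a_i lie in an open half-space of ℤ^p. Then every ℤ^p-graded component of R is finite-dimensional, and the multigraded Hilbert series of any finitely generated graded R-module M has the form p(x)/∏_{i=1}^m (1 − x^{a_i}) with p(x) a finite integer Laurent polynomial; if all a_i ∈ ℕ^p and M is graded by ℕ^p then p(x) is a genuine polynomial. -/
/-!
Multiplication by `X i` raises degrees by `a i`, so in each degree `d` the exact sequence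
`0 → K → M → M → C → 0` (kernel, `X i •`, cokernel) gives
`dim M_d - dim M_(d - a i) = dim C_d - dim K_(d - a i)`, that is
`(1 - x ^ a i) H_M = H_C - x ^ a i H_K`. Kernel and cokernel are again finitely generated graded
modules, and `X i` acts on them as zero. By induction on the set of variables acting non-trivially
one reaches modules killed by every `X i`; these are finite-dimensional over `F`, so only finitely
many of their graded pieces are nonzero.

The graded pieces of the polynomial ring are finite-dimensional because a linear form positive on
every `a i` bounds the total degree of a monomial of given weight. The polynomial case holds
because every nonzero coefficient of `H_M ∏ (1 - x ^ a i)` sits at some `d + ∑ i ∈ T, a i` with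
`M_d ≠ 0`.
-/

open MvPolynomial Module Function DirectSum

theorem Finsupp.finite_setOf_weight_eq {σ ι : Type*} [Finite σ] [AddCommMonoid ι] (w : σ → ι)
    (f : ι →+ ℤ) (hf : ∀ i, 0 < f (w i)) (d : ι) :
    {x : σ →₀ ℕ | weight w x = d}.Finite := by
  refine (finite_of_degree_le (f d).toNat).subset fun x (hx : weight w x = d) => ?_
  have hdeg : ((degree x : ℕ) : ℤ) ≤ f d := by
    rw [← hx, weight_apply, map_finsuppSum, degree_apply, Finsupp.sum, Nat.cast_sum]
    exact Finset.sum_le_sum fun i _ => by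
      rw [map_nsmul, nsmul_eq_mul]
      exact le_mul_of_one_le_right (by positivity) (hf i)
  show degree x ≤ (f d).toNat
  omega

theorem MvPolynomial.finiteDimensional_weightedHomogeneousSubmodule {σ ι F : Type*} [Finite σ]
    [AddCommMonoid ι] [Field F] (w : σ → ι) (f : ι →+ ℤ) (hf : ∀ i, 0 < f (w i)) (d : ι) :
    FiniteDimensional F (weightedHomogeneousSubmodule F w d) := by
  rw [weightedHomogeneousSubmodule_eq_finsupp_supported]
  have := (Finsupp.finite_setOf_weight_eq w f hf d).to_subtype
  exact Module.Finite.of_basis (basisRestrictSupport F _)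

section AlternatingShiftSum

variable {σ ι : Type*} [AddCommGroup ι] (a : σ → ι)

/-- The coefficient of `x ^ b` in `(∑ d, g d • x ^ d) * ∏ i ∈ s, (1 - x ^ a i)`. -/
def alternatingShiftSum (s : Finset σ) (g : ι → ℤ) (b : ι) : ℤ :=
  ∑ T ∈ s.powerset, (-1) ^ T.card * g (b - ∑ i ∈ T, a i)

@[simp]
theorem alternatingShiftSum_empty (g : ι → ℤ) : alternatingShiftSum a ∅ g = g := by
  ext b
  simp [alternatingShiftSum]

theorem alternatingShiftSum_insert [DecidableEq σ] {s : Finset σ} {i : σ} (hi : i ∉ s)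
    (g : ι → ℤ) :
    alternatingShiftSum a (insert i s) g =
      alternatingShiftSum a s fun d => g d - g (d - a i) := by
  ext b
  simp only [alternatingShiftSum, Finset.sum_powerset_insert hi, ← Finset.sum_add_distrib]
  refine Finset.sum_congr rfl fun T hT => ?_
  have hiT : i ∉ T := fun h => hi (Finset.mem_powerset.mp hT h)
  rw [Finset.card_insert_of_notMem hiT, Finset.sum_insert hiT, pow_succ,
    show b - (a i + ∑ j ∈ T, a j) = b - ∑ j ∈ T, a j - a i by abel]
  ring

theorem alternatingShiftSum_sub (s : Finset σ) (g h : ι → ℤ) (b : ι) :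
    alternatingShiftSum a s (fun d => g d - h d) b =
      alternatingShiftSum a s g b - alternatingShiftSum a s h b := by
  simp only [alternatingShiftSum, mul_sub, Finset.sum_sub_distrib]

theorem alternatingShiftSum_comp_sub (s : Finset σ) (g : ι → ℤ) (c b : ι) :
    alternatingShiftSum a s (fun d => g (d - c)) b = alternatingShiftSum a s g (b - c) := by
  simp only [alternatingShiftSum, sub_right_comm]

theorem nonneg_of_alternatingShiftSum_ne_zero [PartialOrder ι] [IsOrderedAddMonoid ι]
    {a : σ → ι} (ha : ∀ i, 0 ≤ a i) {s : Finset σ} {g : ι → ℤ} (hg : ∀ d, g d ≠ 0 → 0 ≤ d)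
    {b : ι} (hb : alternatingShiftSum a s g b ≠ 0) : 0 ≤ b := by
  obtain ⟨T, -, hT⟩ := Finset.exists_ne_zero_of_sum_ne_zero hb
  have h := hg _ (right_ne_zero_of_mul hT)
  calc 0 ≤ ∑ i ∈ T, a i := Finset.sum_nonneg fun i _ => ha i
    _ ≤ b := sub_nonneg.mp h

end AlternatingShiftSum

section GradedSubquotient

variable {ι R M Q : Type*} [DecidableEq ι] [Ring R] [AddCommGroup M] [Module R M]
  [AddCommGroup Q] [Module R Q] (ℳ : ι → Submodule R M) [Decomposition ℳ]

theorem DirectSum.decompose_apply_eq_zero_of_mem_iSup_ne {d : ι} {x : M}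
    (hx : x ∈ ⨆ (e) (_ : e ≠ d), ℳ e) : (decompose ℳ x d : M) = 0 := by
  let proj : M →ₗ[R] M :=
    (ℳ d).subtype ∘ₗ component R ι _ d ∘ₗ (decomposeLinearEquiv ℳ).toLinearMap
  have hle : (⨆ (e) (_ : e ≠ d), ℳ e) ≤ LinearMap.ker proj :=
    iSup₂_le fun e he y hy => by
      simp [proj, ← apply_eq_component, decomposeLinearEquiv_apply, decompose_of_mem_ne ℳ hy he]
  simpa [proj, ← apply_eq_component, decomposeLinearEquiv_apply] using hle hx

theorem DirectSum.isInternal_comap_subtype {P : Submodule R M} (hP : SetLike.IsHomogeneous ℳ P) :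
    IsInternal fun d => (ℳ d).comap P.subtype := by
  classical
  refine isInternal_submodule_of_iSupIndep_of_iSup_eq_top ?_ ?_
  · refine (iSupIndep_map_orderIso_iff (Submodule.mapIic P)).mp
      (iSupIndep.of_coe_Iic_comp ((Decomposition.isInternal ℳ).submodule_iSupIndep.mono
        fun d => ?_))
    simp [Submodule.map_comap_subtype]
  · refine Submodule.map_injective_of_injective P.subtype_injective ?_
    rw [Submodule.map_iSup, Submodule.map_top, Submodule.range_subtype]
    refine le_antisymm (iSup_le fun d => by simp [Submodule.map_comap_subtype]) fun x hx => ?_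
    rw [← sum_support_decompose ℳ x]
    refine Submodule.sum_mem _ fun d _ => Submodule.mem_iSup_of_mem d ?_
    rw [Submodule.map_comap_subtype]
    exact ⟨hP d hx, (decompose ℳ x d).2⟩

theorem DirectSum.isInternal_map_of_surjective {π : M →ₗ[R] Q} (hπ : Surjective π)
    (hker : SetLike.IsHomogeneous ℳ (LinearMap.ker π)) :
    IsInternal fun d => (ℳ d).map π := by
  refine isInternal_submodule_of_iSupIndep_of_iSup_eq_top (fun d => ?_) ?_
  · rw [Submodule.disjoint_def]
    rintro _ ⟨y, hy, rfl⟩ hys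
    simp only [← Submodule.map_iSup] at hys
    obtain ⟨x, hx, hxy⟩ := hys
    have hyx : y - x ∈ LinearMap.ker π := by simp [hxy]
    have hyd := hker d hyx
    rwa [decompose_sub, sub_apply, Submodule.coe_sub, decompose_of_mem_same ℳ hy,
      decompose_apply_eq_zero_of_mem_iSup_ne ℳ hx, sub_zero] at hyd
  · rw [← Submodule.map_iSup, (Decomposition.isInternal ℳ).submodule_iSup_eq_top,
      Submodule.map_top, LinearMap.range_eq_top.mpr hπ]

end GradedSubquotient

section DegreeShift

variable {ι R M : Type*} [DecidableEq ι] [AddGroup ι] [Ring R] [AddCommGroup M] [Module R M]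
  (ℳ : ι → Submodule R M) [Decomposition ℳ] {φ : M →ₗ[R] M} {c : ι}

theorem DirectSum.decompose_apply_add_of_mapsTo (hφ : ∀ d, Set.MapsTo φ (ℳ d) (ℳ (d + c)))
    (x : M) (d : ι) : (decompose ℳ (φ x) (d + c) : M) = φ (decompose ℳ x d) := by
  induction x using Decomposition.inductionOn ℳ with
  | zero => simp
  | @homogeneous e y =>
    obtain ⟨y, hy⟩ := y
    by_cases he : e = d
    · subst he
      rw [decompose_of_mem_same ℳ hy, decompose_of_mem_same ℳ (hφ e hy)]
    · rw [decompose_of_mem_ne ℳ hy he, decompose_of_mem_ne ℳ (hφ e hy) (by simpa using he),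
        map_zero]
  | add y z hy hz => simp [hy, hz]

theorem SetLike.isHomogeneous_ker_of_mapsTo (hφ : ∀ d, Set.MapsTo φ (ℳ d) (ℳ (d + c))) :
    SetLike.IsHomogeneous ℳ (LinearMap.ker φ) := fun d x hx => by
  simp [LinearMap.mem_ker, ← decompose_apply_add_of_mapsTo ℳ hφ, LinearMap.mem_ker.mp hx]

theorem SetLike.isHomogeneous_range_of_mapsTo (hφ : ∀ d, Set.MapsTo φ (ℳ d) (ℳ (d + c))) :
    SetLike.IsHomogeneous ℳ (LinearMap.range φ) := by
  rintro d _ ⟨y, rfl⟩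
  rw [← sub_add_cancel d c, decompose_apply_add_of_mapsTo ℳ hφ]
  exact LinearMap.mem_range_self φ _

theorem Submodule.inf_range_eq_map_of_mapsTo (hφ : ∀ d, Set.MapsTo φ (ℳ d) (ℳ (d + c)))
    (d : ι) : ℳ d ⊓ LinearMap.range φ = (ℳ (d - c)).map φ := by
  refine le_antisymm ?_ ?_
  · rintro x ⟨hxd, y, rfl⟩
    refine ⟨_, (decompose ℳ y (d - c)).2, ?_⟩
    rw [← decompose_apply_add_of_mapsTo ℳ hφ, sub_add_cancel, decompose_of_mem_same ℳ hxd]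
  · rintro _ ⟨y, hy, rfl⟩
    exact ⟨sub_add_cancel d c ▸ hφ (d - c) hy, LinearMap.mem_range_self φ y⟩

end DegreeShift

section Finrank

variable {K V W : Type*} [DivisionRing K] [AddCommGroup V] [Module K V] [AddCommGroup W]
  [Module K W]

theorem Submodule.finrank_comap_subtype (P N : Submodule K V) :
    finrank K (N.comap P.subtype) = finrank K ↥(P ⊓ N) := by
  rw [← map_comap_subtype]
  exact (equivMapOfInjective _ P.subtype_injective _).finrank_eq

theorem Submodule.finiteDimensional_comap_subtype (P A : Submodule K V) [FiniteDimensional K A] :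
    FiniteDimensional K (A.comap P.subtype) := by
  have : FiniteDimensional K ↥(P ⊓ A) := finiteDimensional_inf_right P A
  rw [← map_comap_subtype] at this
  exact Module.Finite.equiv (equivMapOfInjective _ P.subtype_injective _).symm

theorem Submodule.finrank_map_add_finrank_inf_ker (f : V →ₗ[K] W) (A : Submodule K V)
    [FiniteDimensional K A] :
    finrank K (A.map f) + finrank K ↥(A ⊓ LinearMap.ker f) = finrank K A := by
  rw [← LinearMap.range_domRestrict, ← finrank_comap_subtype, ← LinearMap.ker_domRestrict]
  exact LinearMap.finrank_range_add_finrank_ker _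

end Finrank

section ExactSequence

variable {ι K M Q : Type*} [DecidableEq ι] [AddGroup ι] [DivisionRing K] [AddCommGroup M]
  [Module K M]
  [AddCommGroup Q] [Module K Q]
  (ℳ : ι → Submodule K M) [Decomposition ℳ] {φ : M →ₗ[K] M} {c : ι}

/-- Dimension count along the exact sequence `0 → P → M →φ M →π Q → 0` in degree `d`. -/
theorem finrank_sub_finrank_eq_of_mapsTo (hφ : ∀ d, Set.MapsTo φ (ℳ d) (ℳ (d + c)))
    {P : Submodule K M} (hP : LinearMap.ker φ = P) {π : M →ₗ[K] Q}
    (hπ : LinearMap.ker π = LinearMap.range φ) (d : ι) [FiniteDimensional K (ℳ d)]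
    [FiniteDimensional K (ℳ (d - c))] :
    (finrank K (ℳ d) : ℤ) - finrank K (ℳ (d - c)) =
      finrank K ((ℳ d).map π) - finrank K ((ℳ (d - c)).comap P.subtype) := by
  have hcoker := Submodule.finrank_map_add_finrank_inf_ker π (ℳ d)
  have hker := Submodule.finrank_map_add_finrank_inf_ker φ (ℳ (d - c))
  rw [hπ, Submodule.inf_range_eq_map_of_mapsTo ℳ hφ] at hcoker
  rw [hP] at hker
  rw [Submodule.finrank_comap_subtype, inf_comm]
  omega

end ExactSequence

section WeightedGrading

variable {σ ι F M : Type*} [DecidableEq ι] [AddCommGroup ι] [Field F] [AddCommGroup M]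
  [Module (MvPolynomial σ F) M]

theorem quotient_range_lsmul_X_smul_eq_zero [DecidableEq σ] (i : σ) {s : Finset σ}
    (hs : ∀ j ∉ insert i s, ∀ x : M, (X j : MvPolynomial σ F) • x = 0) (j : σ) (hj : j ∉ s)
    (x : M ⧸ LinearMap.range (LinearMap.lsmul (MvPolynomial σ F) M (X i))) :
    (X j : MvPolynomial σ F) • x = 0 := by
  induction x using Submodule.Quotient.induction_on with | H y => ?_
  rw [← Submodule.Quotient.mk_smul, Submodule.Quotient.mk_eq_zero]
  obtain rfl | hji := eq_or_ne j i
  · exact LinearMap.mem_range_self _ y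
  · rw [hs j (by simp [hji, hj]) y]
    exact zero_mem _

variable [Module F M] [IsScalarTower F (MvPolynomial σ F) M]

theorem MvPolynomial.smul_eq_constantCoeff_smul
    (h : ∀ (i : σ) (x : M), (X i : MvPolynomial σ F) • x = 0) (r : MvPolynomial σ F) (x : M) :
    r • x = constantCoeff r • x := by
  induction r using MvPolynomial.induction_on with
  | C c => rw [constantCoeff_C, ← algebraMap_eq, algebraMap_smul]
  | add q r hq hr => rw [add_smul, hq, hr, map_add, add_smul]
  | mul_X q i hq => rw [mul_smul, h, smul_zero, map_mul, constantCoeff_X, mul_zero, zero_smul]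

theorem Module.Finite.of_X_smul_eq_zero [Module.Finite (MvPolynomial σ F) M]
    (h : ∀ (i : σ) (x : M), (X i : MvPolynomial σ F) • x = 0) : Module.Finite F M := by
  obtain ⟨t, ht⟩ := Module.Finite.fg_top (R := MvPolynomial σ F) (M := M)
  suffices hspan : ∀ x ∈ Submodule.span (MvPolynomial σ F) (t : Set M), x ∈ Submodule.span F t from
    ⟨⟨t, top_unique fun x _ => hspan x (ht ▸ trivial)⟩⟩
  intro x hx
  induction hx using Submodule.span_induction with
  | mem y hy => exact Submodule.subset_span hy
  | zero => exact zero_mem _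
  | add y z _ _ hy hz => exact add_mem hy hz
  | smul r y _ hy =>
    rw [smul_eq_constantCoeff_smul h]
    exact Submodule.smul_mem _ _ hy

variable (a : σ → ι)

structure IsWeightedGrading (ℳ : ι → Submodule F M) : Prop where
  isInternal : IsInternal ℳ
  X_smul_mem : ∀ (d : ι) (i : σ), ∀ x ∈ ℳ d, (X i : MvPolynomial σ F) • x ∈ ℳ (d + a i)

variable {a} (ℳ : ι → Submodule F M) (i : σ)

noncomputable def kerXSmulGrading : ι → Submodule F
    ((LinearMap.ker (LinearMap.lsmul (MvPolynomial σ F) M (X i))).restrictScalars F) :=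
  fun d => (ℳ d).comap (Submodule.subtype _)

noncomputable def cokerXSmulGrading : ι → Submodule F
    (M ⧸ LinearMap.range (LinearMap.lsmul (MvPolynomial σ F) M (X i))) :=
  fun d => (ℳ d).map ((Submodule.mkQ _).restrictScalars F)

variable {ℳ}

theorem IsWeightedGrading.mapsTo_X_smul (h : IsWeightedGrading a ℳ) (d : ι) :
    Set.MapsTo ((LinearMap.lsmul (MvPolynomial σ F) M (X i)).restrictScalars F) (ℳ d)
      (ℳ (d + a i)) :=
  fun x hx => h.X_smul_mem d i x hx

theorem IsWeightedGrading.kerXSmul (h : IsWeightedGrading a ℳ) :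
    IsWeightedGrading a (kerXSmulGrading ℳ i) := by
  let _ := h.isInternal.chooseDecomposition
  refine ⟨isInternal_comap_subtype ℳ ?_, fun d j x hx => h.X_smul_mem d j x hx⟩
  rw [← LinearMap.ker_restrictScalars]
  exact SetLike.isHomogeneous_ker_of_mapsTo ℳ (h.mapsTo_X_smul i)

theorem IsWeightedGrading.cokerXSmul (h : IsWeightedGrading a ℳ) :
    IsWeightedGrading a (cokerXSmulGrading ℳ i) := by
  let _ := h.isInternal.chooseDecomposition
  have hker : SetLike.IsHomogeneous ℳ (LinearMap.ker ((Submodule.mkQ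
      (LinearMap.range (LinearMap.lsmul (MvPolynomial σ F) M (X i)))).restrictScalars F)) := by
    rw [LinearMap.ker_restrictScalars, Submodule.ker_mkQ, ← LinearMap.range_restrictScalars]
    exact SetLike.isHomogeneous_range_of_mapsTo ℳ (h.mapsTo_X_smul i)
  refine ⟨isInternal_map_of_surjective ℳ (π := (Submodule.mkQ _).restrictScalars F)
    (Submodule.Quotient.mk_surjective _) hker, ?_⟩
  rintro d j _ ⟨y, hy, rfl⟩
  exact ⟨_, h.X_smul_mem d j y hy, Submodule.Quotient.mk_smul _ _ _⟩

theorem alternatingShiftSum_finrank_insert (h : IsWeightedGrading a ℳ)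
    (hfin : ∀ d, FiniteDimensional F (ℳ d)) [DecidableEq σ] {s : Finset σ} (hi : i ∉ s) (b : ι) :
    alternatingShiftSum a (insert i s) (fun d => finrank F (ℳ d)) b =
      alternatingShiftSum a s (fun d => finrank F (cokerXSmulGrading ℳ i d)) b -
        alternatingShiftSum a s (fun d => finrank F (kerXSmulGrading ℳ i d)) (b - a i) := by
  let _ := h.isInternal.chooseDecomposition
  rw [alternatingShiftSum_insert a hi, ← alternatingShiftSum_comp_sub, ← alternatingShiftSum_sub]
  congr 1
  funext d
  exact finrank_sub_finrank_eq_of_mapsTo ℳ (h.mapsTo_X_smul i)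
    (LinearMap.ker_restrictScalars F _) (by rw [LinearMap.ker_restrictScalars, Submodule.ker_mkQ,
      LinearMap.range_restrictScalars]) d

theorem ker_lsmul_X_smul_eq_zero [DecidableEq σ] {s : Finset σ}
    (hs : ∀ j ∉ insert i s, ∀ x : M, (X j : MvPolynomial σ F) • x = 0) (j : σ) (hj : j ∉ s)
    (x : (LinearMap.ker (LinearMap.lsmul (MvPolynomial σ F) M (X i))).restrictScalars F) :
    (X j : MvPolynomial σ F) • x = 0 := by
  obtain rfl | hji := eq_or_ne j i
  · exact Subtype.ext x.2
  · exact Subtype.ext (hs j (by simp [hji, hj]) x)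

theorem IsWeightedGrading.finite_support_alternatingShiftSum [Finite σ]
    [Module.Finite (MvPolynomial σ F) M] (h : IsWeightedGrading a ℳ)
    (hfin : ∀ d, FiniteDimensional F (ℳ d)) (s : Finset σ)
    (hs : ∀ i ∉ s, ∀ x : M, (X i : MvPolynomial σ F) • x = 0) :
    (support (alternatingShiftSum a s fun d => (finrank F (ℳ d) : ℤ))).Finite := by
  classical
  induction s using Finset.induction_on generalizing M with
  | empty =>
    have := Module.Finite.of_X_smul_eq_zero fun i => hs i (Finset.notMem_empty i)
    refine (Submodule.finite_ne_bot_of_iSupIndep h.isInternal.submodule_iSupIndep).subset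
      fun d hd hbot => ?_
    simp [hbot] at hd
  | insert i s hi ih =>
    have hC := ih (h.cokerXSmul i) (fun d => Module.Finite.map _ _)
      (quotient_range_lsmul_X_smul_eq_zero i hs)
    have : Module.Finite (MvPolynomial σ F)
        ((LinearMap.ker (LinearMap.lsmul (MvPolynomial σ F) M (X i))).restrictScalars F) :=
      Module.Finite.iff_fg.mpr (IsNoetherian.noetherian _)
    have hK := ih (h.kerXSmul i) (fun d => Submodule.finiteDimensional_comap_subtype _ _)
      (ker_lsmul_X_smul_eq_zero i hs)
    rw [funext (alternatingShiftSum_finrank_insert i h hfin hi)]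
    exact (hC.union (hK.preimage sub_left_injective.injOn)).subset (support_sub _ _)

end WeightedGrading

/-- Let `R = F[y_1,…,y_m]` be graded by `ℤ^p` via `deg y_i = a_i`, the `a_i`
lying in an open half-space.  Then every graded component of `R` (the weighted-homogeneous
components) is finite-dimensional, and for every finitely generated `ℤ^p`-graded `R`-module
`M` the multigraded Hilbert series has the form `q(x)/∏_i (1 - x^{a_i})` with `q` a finite
integer Laurent polynomial: i.e. the convolution
`b ↦ Σ_{T ⊆ {1,…,m}} (-1)^{|T|} dim_F M_{b - Σ_{i∈T} a_i}` has finite support; moreover if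
all `a_i ∈ ℕ^p` and `M` is graded by `ℕ^p`, then `q` is supported on `ℕ^p`, i.e. it is a
genuine polynomial. -/
theorem multigraded_hilbert_series_is_nice
    (F : Type*) [Field F] (p m : ℕ) (a : Fin m → (Fin p → ℤ))
    (hhalf : ∃ f : (Fin p → ℤ) →ₗ[ℤ] ℤ, ∀ i, 0 < f (a i))
    (M : Type*) [AddCommGroup M] [Module (MvPolynomial (Fin m) F) M]
    [Module F M] [IsScalarTower F (MvPolynomial (Fin m) F) M]
    (ℳ : (Fin p → ℤ) → Submodule F M)
    (hdecomp : DirectSum.IsInternal ℳ)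
    (hgraded : ∀ (d : Fin p → ℤ) (i : Fin m), ∀ x ∈ ℳ d,
      (MvPolynomial.X i : MvPolynomial (Fin m) F) • x ∈ ℳ (d + a i))
    (hfg : Module.Finite (MvPolynomial (Fin m) F) M)
    (hfin : ∀ d, FiniteDimensional F (ℳ d)) :
    (∀ d : Fin p → ℤ,
      FiniteDimensional F (MvPolynomial.weightedHomogeneousSubmodule F a d)) ∧
    {b : Fin p → ℤ |
        (∑ T : Finset (Fin m), (-1 : ℤ) ^ T.card *
          (Module.finrank F (ℳ (b - ∑ i ∈ T, a i)) : ℤ)) ≠ 0}.Finite ∧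
    ((∀ i j, 0 ≤ a i j) → (∀ d : Fin p → ℤ, (∃ j, d j < 0) → ℳ d = ⊥) →
      ∀ b : Fin p → ℤ,
        (∑ T : Finset (Fin m), (-1 : ℤ) ^ T.card *
          (Module.finrank F (ℳ (b - ∑ i ∈ T, a i)) : ℤ)) ≠ 0 → ∀ j, 0 ≤ b j) := by
  obtain ⟨f, hf⟩ := hhalf
  have hsum : ∀ b, ∑ T : Finset (Fin m), (-1 : ℤ) ^ T.card *
      (finrank F (ℳ (b - ∑ i ∈ T, a i)) : ℤ) =
      alternatingShiftSum a Finset.univ (fun d => finrank F (ℳ d)) b := by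
    simp [alternatingShiftSum, Finset.powerset_univ]
  refine ⟨finiteDimensional_weightedHomogeneousSubmodule a f.toAddMonoidHom hf, ?_,
    fun ha hneg b hb => ?_⟩
  · simp only [hsum]
    exact IsWeightedGrading.finite_support_alternatingShiftSum ⟨hdecomp, hgraded⟩ hfin _
      fun i hi => absurd (Finset.mem_univ i) hi
  · refine nonneg_of_alternatingShiftSum_ne_zero (a := a) (fun i j => ha i j) (fun d hd => ?_)
      (hsum b ▸ hb)
    by_contra hd'
    obtain ⟨j, hj⟩ : ∃ j, d j < 0 := by simpa [Pi.le_def] using hd'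
    simp [hneg d ⟨j, hj⟩] at hd
end

section
/- Let A and B be associative F-algebras and f : A → B a multiplicative homogeneous polynomial map of degree t (f(ab) = f(a)f(b) for all a,b ∈ A). Then the induced linear map from the algebra of symmetric tensors S^t(A) = (A^{⊗t})^{S_t} to B is an algebra homomorphism. -/
/-!
In characteristic `0` a symmetric tensor `x` equals `(1 / t!) • ∑ σ, σ • x`, and by
inclusion–exclusion over the image of `r : ι → ι` the symmetrization `∑ σ, ⨂ i, a (σ i)` of a
pure tensor is the alternating sum `∑ T, (-1)^|T| (∑ i ∉ T, a i)^{⊗t}`. So the symmetric tensors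
are spanned by the diagonal tensors `a^{⊗t}`. On these `L` is multiplicative, since
`a^{⊗t} * b^{⊗t} = (a b)^{⊗t}` and `f (a b) = f a * f b`; bilinearity extends this to the span.
-/

open scoped TensorProduct
open Finset PiTensorProduct

theorem Finset.sum_perm_eq_sum_filter_surjective {α M : Type*} [Fintype α] [DecidableEq α]
    [AddCommMonoid M] (g : (α → α) → M) :
    ∑ σ : Equiv.Perm α, g σ = ∑ r ∈ univ.filter Function.Surjective, g r :=
  sum_nbij (⇑) (fun σ _ => by simpa using σ.surjective)
    (fun _ _ _ _ h => Equiv.ext (congrFun h))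
    (fun r hr => ⟨Equiv.ofBijective r (Finite.surjective_iff_bijective.mp (mem_filter.mp hr).2),
      mem_coe.mpr (mem_univ _), rfl⟩)
    (fun _ _ => rfl)

theorem Finset.sum_filter_surjective_eq_sum_powerset {α β G : Type*} [Fintype α] [DecidableEq α]
    [Fintype β] [DecidableEq β] [AddCommGroup G] (g : (α → β) → G) :
    ∑ r ∈ univ.filter Function.Surjective, g r
      = ∑ T : Finset β, (-1 : ℤ) ^ #T • ∑ r ∈ Fintype.piFinset fun _ => Tᶜ, g r := by
  rw [← powerset_univ]
  convert inclusion_exclusion_sum_inf_compl univ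
    (fun b => univ.filter fun r : α → β => b ∉ Set.range r) g using 3 with T
  · ext r
    simp [Function.Surjective, mem_inf]
  · congr 1
    ext r
    simp only [Fintype.mem_piFinset, mem_compl, mem_inf, mem_filter, mem_univ, true_and,
      Set.mem_range, not_exists]
    grind

namespace PiTensorProduct

variable {ι M : Type*} [Fintype ι] [DecidableEq ι] [AddCommGroup M]

theorem sum_perm_tprod_eq_sum_powerset {R : Type*} [CommRing R] [Module R M] (a : ι → M) :
    ∑ σ : Equiv.Perm ι, tprod R (fun i => a (σ i))
      = ∑ T : Finset ι, (-1 : ℤ) ^ #T • tprod R (fun _ : ι => ∑ i ∈ Tᶜ, a i) := by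
  rw [sum_perm_eq_sum_filter_surjective (fun r => tprod R fun i => a (r i)),
    sum_filter_surjective_eq_sum_powerset]
  simp only [MultilinearMap.map_sum_finset]

theorem sum_reindex_perm_mem_span_tprod_const {R : Type*} [CommRing R] [Module R M]
    (x : ⨂[R] _ : ι, M) :
    ∑ σ : Equiv.Perm ι, reindex R (fun _ => M) σ x
      ∈ Submodule.span R (Set.range fun m : M => tprod R fun _ : ι => m) := by
  induction x using PiTensorProduct.induction_on with
  | smul_tprod c a =>
    have hsymm : ∑ σ : Equiv.Perm ι, reindex R (fun _ => M) σ (tprod R a)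
        = ∑ σ : Equiv.Perm ι, tprod R (fun i => a (σ i)) :=
      Fintype.sum_equiv (Equiv.inv _) _ _ fun σ => reindex_tprod σ a
    simp only [map_smul, ← smul_sum, hsymm, sum_perm_tprod_eq_sum_powerset]
    exact Submodule.smul_mem _ _ <| Submodule.sum_mem _ fun T _ =>
      Submodule.smul_of_tower_mem _ _ (Submodule.subset_span ⟨_, rfl⟩)
  | add x y hx hy =>
    simpa only [map_add, sum_add_distrib] using Submodule.add_mem _ hx hy

theorem mem_span_tprod_const_of_forall_reindex_eq {R : Type*} [Field R] [CharZero R] [Module R M]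
    {x : ⨂[R] _ : ι, M} (hx : ∀ σ : Equiv.Perm ι, reindex R (fun _ => M) σ x = x) :
    x ∈ Submodule.span R (Set.range fun m : M => tprod R fun _ : ι => m) := by
  have hsum : ∑ σ : Equiv.Perm ι, reindex R (fun _ => M) σ x
      = ((Fintype.card ι).factorial : R) • x := by
    rw [sum_congr rfl fun σ _ => hx σ, sum_const, card_univ, Fintype.card_perm,
      Nat.cast_smul_eq_nsmul]
  have hne : ((Fintype.card ι).factorial : R) ≠ 0 := Nat.cast_ne_zero.mpr (Nat.factorial_ne_zero _)
  rw [← inv_smul_smul₀ hne x, ← hsum]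
  exact Submodule.smul_mem _ _ (sum_reindex_perm_mem_span_tprod_const x)

end PiTensorProduct

theorem LinearMap.map_mul_of_mem_span {R S B : Type*} [CommSemiring R] [Semiring S] [Algebra R S]
    [Semiring B] [Algebra R B] (L : S →ₗ[R] B) {G : Set S}
    (hG : ∀ a ∈ G, ∀ b ∈ G, L (a * b) = L a * L b) {x y : S}
    (hx : x ∈ Submodule.span R G) (hy : y ∈ Submodule.span R G) : L (x * y) = L x * L y := by
  have hGy : ∀ a ∈ G, L (a * y) = L a * L y := fun a ha =>
    eqOn_span (f := L ∘ₗ mulLeft R a) (g := mulLeft R (L a) ∘ₗ L) (hG a ha) hy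
  exact eqOn_span (f := L ∘ₗ mulRight R y) (g := mulRight R (L y) ∘ₗ L) hGy hx

/-- (Roby) Let `f : A → B` be a multiplicative homogeneous polynomial map of
degree `t` between associative `F`-algebras (char `0`), i.e. `f` factors as `a ↦ a^{⊗t}`
followed by a linear map `L : A^{⊗t} → B`, and `f(ab) = f(a)f(b)`.  Then the induced map on
the algebra `S^t(A) = (A^{⊗t})^{S_t}` of symmetric tensors is an algebra homomorphism: `L` is
multiplicative on symmetric tensors. -/
theorem multiplicative_polynomial_map_symmetric_tensors
    (F : Type*) [Field F] [CharZero F]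
    (A : Type*) [Ring A] [Algebra F A] (B : Type*) [Ring B] [Algebra F B]
    (t : ℕ) (f : A → B)
    (L : (⨂[F] _ : Fin t, A) →ₗ[F] B)
    (hfactor : ∀ a : A, f a = L (PiTensorProduct.tprod F fun _ => a))
    (hmul : ∀ a b : A, f (a * b) = f a * f b) :
    ∀ x y : ⨂[F] _ : Fin t, A,
      (∀ σ : Equiv.Perm (Fin t), PiTensorProduct.reindex F (fun _ : Fin t => A) σ x = x) →
      (∀ σ : Equiv.Perm (Fin t), PiTensorProduct.reindex F (fun _ : Fin t => A) σ y = y) →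
      L (x * y) = L x * L y := by
  intro x y hx hy
  refine L.map_mul_of_mem_span ?_ (mem_span_tprod_const_of_forall_reindex_eq hx)
    (mem_span_tprod_const_of_forall_reindex_eq hy)
  rintro _ ⟨a, rfl⟩ _ ⟨b, rfl⟩
  rw [tprod_mul_tprod, ← hfactor, ← hfactor, ← hmul]
  exact (hfactor (a * b)).symm
end
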